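/- arXiv:2002.03882 — 5 statements merged into one kernel-verified Lean document; each statement's English description precedes it below -/
import Mathlib

section
/- Suppose (u_k, y_k), k = 0,…,N−1, is a trajectory of a minimal realization (A,B,C,D) of order n, and suppose u is persistently exciting of order L+n. Then a pair of sequences (ū_i, ȳ_i), i = 0,…,L−1, is a trajectory of (A,B,C,D) if and only if there exists α ∈ ℝ^{N−L+1} such that Σ_{j=0}^{N−L} α_j u_{i+j} = ū_i and Σ_{j=0}^{N−L} α_j y_{i+j} = ȳ_i for all i = 0,…,L−1. -/
open Matrix Finset

/-- `(u, y)` is a trajectory of `(A, B, C, D)` over the horizon `N`. -/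
def IsTrajectory {n m p : ℕ} (A : Matrix (Fin n) (Fin n) ℝ) (B : Matrix (Fin n) (Fin m) ℝ)
    (C : Matrix (Fin p) (Fin n) ℝ) (D : Matrix (Fin p) (Fin m) ℝ)
    (N : ℕ) (u : ℕ → Fin m → ℝ) (y : ℕ → Fin p → ℝ) : Prop :=
  ∃ x : ℕ → Fin n → ℝ, ∀ k < N,
    x (k + 1) = A.mulVec (x k) + B.mulVec (u k) ∧
    y k = C.mulVec (x k) + D.mulVec (u k)

/-- The observability matrix `col(C, CA, …, CA^{n-1})`. -/
def obsMat {n p : ℕ} (A : Matrix (Fin n) (Fin n) ℝ) (C : Matrix (Fin p) (Fin n) ℝ) :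
    Matrix (Fin n × Fin p) (Fin n) ℝ :=
  fun ip j => (C * A ^ (ip.1 : ℕ)) ip.2 j

/-- The controllability matrix `(B, AB, …, A^{n-1}B)`. -/
def ctrbMat {n m : ℕ} (A : Matrix (Fin n) (Fin n) ℝ) (B : Matrix (Fin n) (Fin m) ℝ) :
    Matrix (Fin n) (Fin n × Fin m) ℝ :=
  fun i jm => (A ^ (jm.1 : ℕ) * B) i jm.2

/-- Minimality of a realization. -/
def IsMinimal {n m p : ℕ} (A : Matrix (Fin n) (Fin n) ℝ) (B : Matrix (Fin n) (Fin m) ℝ)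
    (C : Matrix (Fin p) (Fin n) ℝ) : Prop :=
  (obsMat A C).rank = n ∧ (ctrbMat A B).rank = n

/-- The Hankel matrix of depth `L` of a signal of length `N`. -/
def hankelMat (q L N : ℕ) (u : ℕ → Fin q → ℝ) :
    Matrix (Fin L × Fin q) (Fin (N - L + 1)) ℝ :=
  fun is j => u ((is.1 : ℕ) + (j : ℕ)) is.2

/-- Persistency of excitation of order `L` of a signal of length `N`. -/
def PersistentlyExciting (m L N : ℕ) (u : ℕ → Fin m → ℝ) : Prop :=
  (hankelMat m L N u).rank = m * L

lemma auxVecMulInj {a b : Type*} [Fintype a] [Fintype b] (M : Matrix a b ℝ)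
    (h : M.rank = Fintype.card a) (v : a → ℝ) (hv : v ᵥ* M = 0) : v = 0 := by
  have h1 : Mᵀ.rank = Fintype.card a := by rw [Matrix.rank_transpose]; exact h
  have h2 := LinearMap.finrank_range_add_finrank_ker (Mᵀ.mulVecLin)
  rw [Module.finrank_fintype_fun_eq_card] at h2
  rw [Matrix.rank] at h1
  have hker : Module.finrank ℝ (LinearMap.ker Mᵀ.mulVecLin) = 0 := by omega
  have hbot : LinearMap.ker Mᵀ.mulVecLin = ⊥ := Submodule.finrank_eq_zero.mp hker
  have hv' : Mᵀ.mulVecLin v = 0 := by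
    show Mᵀ.mulVec v = 0
    rw [Matrix.mulVec_transpose]; exact hv
  have hmem : v ∈ LinearMap.ker Mᵀ.mulVecLin := hv'
  rw [hbot] at hmem; simpa using hmem

lemma auxSurj {a b : Type*} [Fintype a] [Fintype b] (M : Matrix a b ℝ)
    (h : ∀ v : a → ℝ, v ᵥ* M = 0 → v = 0) : Function.Surjective M.mulVec := by
  have hker : LinearMap.ker Mᵀ.mulVecLin = ⊥ := by
    rw [LinearMap.ker_eq_bot']
    intro v hv
    exact h v (by rw [← Matrix.mulVec_transpose]; exact hv)
  have h2 := LinearMap.finrank_range_add_finrank_ker (Mᵀ.mulVecLin)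
  rw [hker, finrank_bot, add_zero, Module.finrank_fintype_fun_eq_card] at h2
  have h3 : M.rank = Fintype.card a := by
    rw [← Matrix.rank_transpose]; exact h2
  have h4 : LinearMap.range M.mulVecLin = ⊤ := by
    apply Submodule.eq_top_of_finrank_eq
    rw [← Matrix.rank, h3, Module.finrank_fintype_fun_eq_card]
  intro w
  obtain ⟨v, hv⟩ := LinearMap.range_eq_top.mp h4 w
  exact ⟨v, hv⟩

lemma auxMulVecScalar {a b : ℕ} {W : ℕ} (M : Matrix (Fin a) (Fin b) ℝ) (α : Fin W → ℝ)
    (v : Fin W → Fin b → ℝ) (t : Fin a) :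
    M.mulVec (fun r => ∑ j, α j * v j r) t = ∑ j, α j * M.mulVec (v j) t := by
  simp only [Matrix.mulVec, dotProduct, Finset.mul_sum]
  rw [Finset.sum_comm]
  exact Finset.sum_congr rfl fun j _ =>
    Finset.sum_congr rfl fun r _ => by ring

lemma auxMulVecSum {a b : ℕ} {ι : Type*} (M : Matrix (Fin a) (Fin b) ℝ) (s : Finset ι)
    (f : ι → Fin b → ℝ) : M.mulVec (∑ i ∈ s, f i) = ∑ i ∈ s, M.mulVec (f i) := by
  exact map_sum M.mulVecLin f s

lemma auxDotSum {q : ℕ} {ι : Type*} (v : Fin q → ℝ) (s : Finset ι) (f : ι → Fin q → ℝ) :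
    v ⬝ᵥ (∑ i ∈ s, f i) = ∑ i ∈ s, v ⬝ᵥ f i := by
  simp only [dotProduct, Finset.sum_apply, Finset.mul_sum]
  exact Finset.sum_comm

lemma auxSumDot {q : ℕ} {ι : Type*} (s : Finset ι) (f : ι → Fin q → ℝ) (v : Fin q → ℝ) :
    (∑ i ∈ s, f i) ⬝ᵥ v = ∑ i ∈ s, f i ⬝ᵥ v := by
  simp only [dotProduct, Finset.sum_apply, Finset.sum_mul]
  exact Finset.sum_comm

lemma auxState {n m : ℕ} (A : Matrix (Fin n) (Fin n) ℝ) (B : Matrix (Fin n) (Fin m) ℝ)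
    (N : ℕ) (u : ℕ → Fin m → ℝ) (x : ℕ → Fin n → ℝ)
    (hx : ∀ k < N, x (k+1) = A.mulVec (x k) + B.mulVec (u k)) :
    ∀ k j, j + k ≤ N → x (j + k) = (A ^ k).mulVec (x j) +
      ∑ t ∈ Finset.range k, (A ^ (k - 1 - t) * B).mulVec (u (j + t)) := by
  intro k
  induction k with
  | zero => intro j hj; simp [Matrix.one_mulVec]
  | succ k ih =>
    intro j hj
    have hrec := hx (j + k) (by omega)
    rw [show j + (k+1) = (j+k)+1 by omega, hrec, ih j (by omega)]
    rw [Finset.sum_range_succ, Matrix.mulVec_add, auxMulVecSum]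
    rw [Matrix.mulVec_mulVec, ← pow_succ']
    have hsum : ∀ t ∈ Finset.range k,
        A.mulVec ((A ^ (k - 1 - t) * B).mulVec (u (j + t)))
          = (A ^ (k + 1 - 1 - t) * B).mulVec (u (j + t)) := by
      intro t ht
      rw [Matrix.mulVec_mulVec, ← Matrix.mul_assoc, ← pow_succ']
      rw [show k - 1 - t + 1 = k + 1 - 1 - t by simp at ht; omega]
    rw [Finset.sum_congr rfl hsum]
    rw [show k + 1 - 1 - k = 0 by omega, pow_zero, Matrix.one_mul]
    abel

lemma auxCH {n : ℕ} (A : Matrix (Fin n) (Fin n) ℝ) :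
    A ^ n = ∑ k ∈ Finset.range n, (-(A.charpoly.coeff k)) • A ^ k := by
  have h0 := Matrix.aeval_self_charpoly A
  rw [Polynomial.aeval_eq_sum_range, Matrix.charpoly_natDegree_eq_dim, Fintype.card_fin,
    Finset.sum_range_succ] at h0
  have hcn : A.charpoly.coeff n = 1 := by
    have hm := A.charpoly_monic
    rw [Polynomial.Monic.def, Polynomial.leadingCoeff, Matrix.charpoly_natDegree_eq_dim,
      Fintype.card_fin] at hm
    exact hm
  rw [hcn, one_smul] at h0
  have h1 := eq_neg_of_add_eq_zero_right h0
  rw [h1, ← Finset.sum_neg_distrib]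
  exact Finset.sum_congr rfl fun k _ => by rw [neg_smul]

/-- The coefficient vector used in the kernel argument. -/
noncomputable def gAux {n m : ℕ} (A : Matrix (Fin n) (Fin n) ℝ) (B : Matrix (Fin n) (Fin m) ℝ)
    (L : ℕ) (η : ℕ → Fin m → ℝ) (ξ : Fin n → ℝ) (i : ℕ) : Fin m → ℝ :=
  (if i < n then ξ ᵥ* (A ^ (n - 1 - i) * B) else η (i - n))
    - ∑ k ∈ Finset.range n, (-(A.charpoly.coeff k)) •
        (if i < k then ξ ᵥ* (A ^ (k - 1 - i) * B) else if i < k + L then η (i - k) else 0)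

lemma auxKernel {n m L N : ℕ} (A : Matrix (Fin n) (Fin n) ℝ) (B : Matrix (Fin n) (Fin m) ℝ)
    (u : ℕ → Fin m → ℝ) (x : ℕ → Fin n → ℝ)
    (hx : ∀ k < N, x (k+1) = A.mulVec (x k) + B.mulVec (u k))
    (hctrb : (ctrbMat A B).rank = n)
    (hpe : (hankelMat m (L+n) N u).rank = m * (L+n))
    (hL : 1 ≤ L) (hLN : L + n ≤ N)
    (η : ℕ → Fin m → ℝ) (ξ : Fin n → ℝ)
    (hyp : ∀ j, j + L ≤ N → (∑ i ∈ Finset.range L, η i ⬝ᵥ u (j + i)) + ξ ⬝ᵥ x j = 0) :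
    (∀ i < L, η i = 0) ∧ ξ = 0 := by
  -- the key intermediate identities
  have star : ∀ k ≤ n, ∀ j, j + k + L ≤ N →
      (∑ t ∈ Finset.range k, (ξ ᵥ* (A ^ (k - 1 - t) * B)) ⬝ᵥ u (j + t))
        + (∑ i ∈ Finset.range L, η i ⬝ᵥ u (j + k + i))
        + (ξ ᵥ* (A ^ k)) ⬝ᵥ x j = 0 := by
    intro k hk j hj
    have h1 := hyp (j + k) (by omega)
    rw [auxState A B N u x hx k j (by omega)] at h1
    rw [dotProduct_add, auxDotSum] at h1
    rw [Matrix.dotProduct_mulVec] at h1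
    have e2 : ∀ t ∈ Finset.range k,
        ξ ⬝ᵥ (A ^ (k-1-t) * B).mulVec (u (j+t)) = (ξ ᵥ* (A ^ (k-1-t) * B)) ⬝ᵥ u (j+t) :=
      fun t _ => Matrix.dotProduct_mulVec ξ _ _
    rw [Finset.sum_congr rfl e2] at h1
    linarith [h1]
  -- Cayley-Hamilton, in dot-product form
  have hCH : ∀ w : Fin n → ℝ, (ξ ᵥ* (A ^ n)) ⬝ᵥ w
      = ∑ k ∈ Finset.range n, (-(A.charpoly.coeff k)) * ((ξ ᵥ* (A ^ k)) ⬝ᵥ w) := by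
    intro w
    have hγn : ξ ᵥ* (A ^ n) = ∑ k ∈ Finset.range n, (-(A.charpoly.coeff k)) • (ξ ᵥ* (A ^ k)) := by
      rw [auxCH A]
      funext s
      simp only [Matrix.vecMul, dotProduct, Finset.sum_apply, Matrix.sum_apply,
        Matrix.smul_apply, smul_eq_mul, Pi.smul_apply, Finset.mul_sum]
      rw [Finset.sum_comm]
      exact Finset.sum_congr rfl fun k _ => Finset.sum_congr rfl fun t _ => by ring
    rw [hγn, auxSumDot]
    exact Finset.sum_congr rfl fun k _ => by rw [smul_dotProduct]; simp
  -- the window identity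
  have W : ∀ j, j + (L + n) ≤ N →
      ∑ i ∈ Finset.range (L + n), gAux A B L η ξ i ⬝ᵥ u (j + i) = 0 := by
    intro j hj
    have e0 : ∀ i, gAux A B L η ξ i ⬝ᵥ u (j+i)
        = ((if i < n then ξ ᵥ* (A ^ (n-1-i) * B) else η (i - n)) ⬝ᵥ u (j+i))
          - ∑ k ∈ Finset.range n, (-(A.charpoly.coeff k)) *
              ((if i < k then ξ ᵥ* (A ^ (k-1-i) * B) else if i < k + L then η (i-k) else 0) ⬝ᵥ u (j+i)) := by
      intro i
      show ((if i < n then ξ ᵥ* (A ^ (n-1-i) * B) else η (i - n))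
          - ∑ k ∈ Finset.range n, (-(A.charpoly.coeff k)) •
              (if i < k then ξ ᵥ* (A ^ (k-1-i) * B) else if i < k + L then η (i-k) else 0)) ⬝ᵥ u (j+i) = _
      rw [sub_dotProduct, auxSumDot]
      congr 1
      exact Finset.sum_congr rfl fun k _ => by rw [smul_dotProduct]; simp
    rw [Finset.sum_congr rfl (fun i _ => e0 i), Finset.sum_sub_distrib, Finset.sum_comm]
    have eA : ∑ i ∈ Finset.range (L+n),
        ((if i < n then ξ ᵥ* (A ^ (n-1-i) * B) else η (i - n)) ⬝ᵥ u (j+i))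
        = -((ξ ᵥ* (A ^ n)) ⬝ᵥ x j) := by
      rw [show L + n = n + L by omega, Finset.sum_range_add]
      have p1 : ∀ i ∈ Finset.range n,
          ((if i < n then ξ ᵥ* (A ^ (n-1-i) * B) else η (i - n)) ⬝ᵥ u (j+i))
            = (ξ ᵥ* (A ^ (n-1-i) * B)) ⬝ᵥ u (j+i) := fun i hi => by
        rw [if_pos (Finset.mem_range.mp hi)]
      have p2 : ∀ i ∈ Finset.range L,
          ((if n+i < n then ξ ᵥ* (A ^ (n-1-(n+i)) * B) else η (n+i - n)) ⬝ᵥ u (j+(n+i)))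
            = η i ⬝ᵥ u (j+n+i) := by
        intro i hi
        rw [if_neg (by omega), show n+i-n = i by omega, show j+(n+i) = j+n+i by omega]
      rw [Finset.sum_congr rfl p1, Finset.sum_congr rfl p2]
      have hs := star n le_rfl j (by omega)
      linarith
    have eB : ∀ k ∈ Finset.range n, ∑ i ∈ Finset.range (L+n),
        ((if i < k then ξ ᵥ* (A ^ (k-1-i) * B) else if i < k + L then η (i-k) else 0) ⬝ᵥ u (j+i))
        = -((ξ ᵥ* (A ^ k)) ⬝ᵥ x j) := by
      intro k hk
      have hkn : k < n := Finset.mem_range.mp hk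
      rw [show L + n = k + (L + (n - k)) by omega, Finset.sum_range_add, Finset.sum_range_add]
      have q1 : ∀ i ∈ Finset.range k,
          ((if i < k then ξ ᵥ* (A ^ (k-1-i) * B) else if i < k + L then η (i-k) else 0) ⬝ᵥ u (j+i))
            = (ξ ᵥ* (A ^ (k-1-i) * B)) ⬝ᵥ u (j+i) := fun i hi => by
        rw [if_pos (Finset.mem_range.mp hi)]
      have q2 : ∀ i ∈ Finset.range L,
          ((if k+i < k then ξ ᵥ* (A ^ (k-1-(k+i)) * B) else if k+i < k + L then η (k+i-k) else 0) ⬝ᵥ u (j+(k+i)))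
            = η i ⬝ᵥ u (j+k+i) := by
        intro i hi
        have hiL : i < L := Finset.mem_range.mp hi
        rw [if_neg (by omega), if_pos (by omega), show k+i-k = i by omega,
          show j+(k+i) = j+k+i by omega]
      have q3 : ∀ i ∈ Finset.range (n-k),
          ((if k+(L+i) < k then ξ ᵥ* (A ^ (k-1-(k+(L+i))) * B) else if k+(L+i) < k + L then η (k+(L+i)-k) else 0) ⬝ᵥ u (j+(k+(L+i))))
            = 0 := by
        intro i hi
        rw [if_neg (by omega), if_neg (by omega)]
        exact zero_dotProduct _
      rw [Finset.sum_congr rfl q1, Finset.sum_congr rfl q2, Finset.sum_congr rfl q3,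
        Finset.sum_const_zero, add_zero]
      have hs := star k (by omega) j (by omega)
      linarith
    have eB' : ∀ k ∈ Finset.range n, (∑ i ∈ Finset.range (L+n), (-(A.charpoly.coeff k)) *
        ((if i < k then ξ ᵥ* (A ^ (k-1-i) * B) else if i < k + L then η (i-k) else 0) ⬝ᵥ u (j+i)))
        = (-(A.charpoly.coeff k)) * (-((ξ ᵥ* (A ^ k)) ⬝ᵥ x j)) := by
      intro k hk
      rw [← Finset.mul_sum, eB k hk]
    rw [eA, Finset.sum_congr rfl eB']
    have hch := hCH (x j)
    rw [hch]
    rw [← Finset.sum_neg_distrib]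
    rw [Finset.sum_congr rfl (fun k _ => (mul_neg (-(A.charpoly.coeff k)) _).symm)]
    ring
  -- apply persistency of excitation
  have hg : ∀ i, i < L + n → gAux A B L η ξ i = 0 := by
    have hGH : (fun p : Fin (L+n) × Fin m => gAux A B L η ξ (p.1 : ℕ) p.2)
        ᵥ* hankelMat m (L+n) N u = 0 := by
      funext jf
      have hj : (jf : ℕ) + (L + n) ≤ N := by
        have := jf.isLt; omega
      have hw := W jf hj
      simp only [Matrix.vecMul, dotProduct, hankelMat, Pi.zero_apply]
      rw [Fintype.sum_prod_type]
      have eq1 : ∀ i : Fin (L+n),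
          (∑ s, gAux A B L η ξ (i:ℕ) s * u ((i:ℕ) + (jf:ℕ)) s)
            = gAux A B L η ξ (i:ℕ) ⬝ᵥ u ((jf:ℕ) + (i:ℕ)) := by
        intro i
        rw [show (i:ℕ) + (jf:ℕ) = (jf:ℕ) + (i:ℕ) by omega]
        rfl
      rw [Finset.sum_congr rfl (fun i _ => eq1 i)]
      rw [Fin.sum_univ_eq_sum_range (fun i => gAux A B L η ξ i ⬝ᵥ u ((jf:ℕ) + i))]
      exact hw
    have hcard : Fintype.card (Fin (L+n) × Fin m) = (L+n) * m := by simp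
    have hG0 := auxVecMulInj (hankelMat m (L+n) N u)
      (by rw [hpe, hcard, Nat.mul_comm]) _ hGH
    intro i hi
    funext s
    have := congrFun hG0 (⟨i, hi⟩, s)
    simpa using this
  -- η vanishes
  have hηeq : ∀ i, i < L → η i = ∑ k ∈ Finset.range n, (-(A.charpoly.coeff k)) •
      (if n + i < k + L then η (n + i - k) else (0 : Fin m → ℝ)) := by
    intro i hi
    have h0 := hg (n + i) (by omega)
    unfold gAux at h0
    rw [if_neg (by omega), show n + i - n = i by omega] at h0
    have h1 : ∀ k ∈ Finset.range n, (-(A.charpoly.coeff k)) •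
        (if n+i < k then ξ ᵥ* (A ^ (k-1-(n+i)) * B) else if n+i < k + L then η (n+i-k) else 0)
        = (-(A.charpoly.coeff k)) • (if n + i < k + L then η (n + i - k) else (0 : Fin m → ℝ)) := by
      intro k hk
      have := Finset.mem_range.mp hk
      rw [if_neg (by omega)]
    rw [Finset.sum_congr rfl h1] at h0
    exact sub_eq_zero.mp h0
  have hη : ∀ d i, L ≤ i + d → i < L → η i = 0 := by
    intro d
    induction d with
    | zero => intro i h1 h2; exact absurd h2 (by omega)
    | succ d ih =>
      intro i h1 h2
      rw [hηeq i h2]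
      apply Finset.sum_eq_zero
      intro k hk
      have hkn := Finset.mem_range.mp hk
      by_cases hc : n + i < k + L
      · rw [if_pos hc, ih (n+i-k) (by omega) (by omega), smul_zero]
      · rw [if_neg hc, smul_zero]
  -- the Markov parameters annihilated by ξ vanish
  have hβ : ∀ r, r < n → ξ ᵥ* (A ^ r * B) = 0 := by
    intro r
    induction r using Nat.strong_induction_on with
    | _ r ih =>
    intro hr
    have h0 := hg (n - 1 - r) (by omega)
    unfold gAux at h0
    rw [if_pos (by omega), show n - 1 - (n - 1 - r) = r by omega] at h0
    have h1 : ∀ k ∈ Finset.range n, (-(A.charpoly.coeff k)) •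
        (if n-1-r < k then ξ ᵥ* (A ^ (k-1-(n-1-r)) * B) else if n-1-r < k + L then η (n-1-r-k) else 0)
        = (0 : Fin m → ℝ) := by
      intro k hk
      have hkn := Finset.mem_range.mp hk
      by_cases hc : n-1-r < k
      · rw [if_pos hc, ih (k-1-(n-1-r)) (by omega) (by omega), smul_zero]
      · rw [if_neg hc]
        by_cases hc2 : n-1-r < k + L
        · rw [if_pos hc2, hη L (n-1-r-k) (by omega) (by omega), smul_zero]
        · rw [if_neg hc2, smul_zero]
    rw [Finset.sum_congr rfl h1, Finset.sum_const_zero, sub_zero] at h0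
    exact h0
  have hξ : ξ = 0 := by
    apply auxVecMulInj (ctrbMat A B) (by rw [hctrb, Fintype.card_fin])
    funext pp
    have h := congrFun (hβ (pp.1 : ℕ) pp.1.isLt) pp.2
    simpa [Matrix.vecMul, dotProduct, ctrbMat] using h
  exact ⟨fun i hi => hη L i (by omega) hi, hξ⟩

/-- Fundamental lemma: for a trajectory of a minimal realization with
persistently exciting input of order `L + n`, a length-`L` pair of sequences is a trajectory
iff it is a linear combination of time shifts of the measured data. -/

theorem statement0 {n m p N L : ℕ} (A : Matrix (Fin n) (Fin n) ℝ) (B : Matrix (Fin n) (Fin m) ℝ)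
    (C : Matrix (Fin p) (Fin n) ℝ) (D : Matrix (Fin p) (Fin m) ℝ)
    (u : ℕ → Fin m → ℝ) (y : ℕ → Fin p → ℝ)
    (hL : 1 ≤ L) (hLN : L + n ≤ N)
    (htraj : IsTrajectory A B C D N u y)
    (hmin : IsMinimal A B C)
    (hpe : PersistentlyExciting m (L + n) N u)
    (ubar : ℕ → Fin m → ℝ) (ybar : ℕ → Fin p → ℝ) :
    IsTrajectory A B C D L ubar ybar ↔
      ∃ α : Fin (N - L + 1) → ℝ, ∀ i < L,
        (∀ s, ubar i s = ∑ j : Fin (N - L + 1), α j * u (i + (j : ℕ)) s) ∧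
        (∀ s, ybar i s = ∑ j : Fin (N - L + 1), α j * y (i + (j : ℕ)) s) := by
  obtain ⟨x, hx⟩ := htraj
  have hxr : ∀ k < N, x (k+1) = A.mulVec (x k) + B.mulVec (u k) := fun k hk => (hx k hk).1
  have hyr : ∀ k < N, y k = C.mulVec (x k) + D.mulVec (u k) := fun k hk => (hx k hk).2
  constructor
  · rintro ⟨xb, hxb⟩
    have hsurj : Function.Surjective (Matrix.mulVec (fun r (j : Fin (N-L+1)) =>
        Sum.elim (fun pr : Fin L × Fin m => u ((pr.1:ℕ) + (j:ℕ)) pr.2)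
          (fun t => x (j:ℕ) t) r)) := by
      apply auxSurj
      intro v hv
      have hyp : ∀ j, j + L ≤ N →
          (∑ i ∈ Finset.range L, (fun i' => if h : i' < L then
              (fun s => v (Sum.inl (⟨i',h⟩,s))) else (0 : Fin m → ℝ)) i ⬝ᵥ u (j + i))
            + (fun t => v (Sum.inr t)) ⬝ᵥ x j = 0 := by
        intro j hj
        have hcol := congrFun hv ⟨j, by omega⟩
        simp only [Matrix.vecMul, dotProduct, Pi.zero_apply, Sum.elim_inl,
          Sum.elim_inr, Fintype.sum_sum_type, Fintype.sum_prod_type] at hcol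
        have e1 : ∀ i : Fin L, (∑ s, v (Sum.inl (i, s)) * u ((i:ℕ) + j) s)
            = (fun i' => if h : i' < L then (fun s => v (Sum.inl (⟨i',h⟩,s))) else
                (0 : Fin m → ℝ)) (i:ℕ) ⬝ᵥ u (j + (i:ℕ)) := by
          intro i
          rw [show (i:ℕ) + j = j + (i:ℕ) by omega]
          simp only [dif_pos i.isLt, dotProduct, Fin.eta]
        rw [Finset.sum_congr rfl (fun i _ => e1 i)] at hcol
        rw [Fin.sum_univ_eq_sum_range (fun i' => (fun i'' => if h : i'' < L then
            (fun s => v (Sum.inl (⟨i'',h⟩,s))) else (0 : Fin m → ℝ)) i' ⬝ᵥ u (j + i'))] at hcol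
        exact hcol
      obtain ⟨h1, h2⟩ := auxKernel A B u x hxr hmin.2 hpe hL hLN
        (fun i => if h : i < L then (fun s => v (Sum.inl (⟨i,h⟩,s))) else 0)
        (fun t => v (Sum.inr t)) hyp
      funext r
      cases r with
      | inl pr =>
        have h3 := congrFun (h1 (pr.1:ℕ) pr.1.isLt) pr.2
        rw [dif_pos pr.1.isLt] at h3
        simpa using h3
      | inr t => exact congrFun h2 t
    obtain ⟨α, hα⟩ := hsurj (Sum.elim (fun pr : Fin L × Fin m => ubar (pr.1:ℕ) pr.2)
      (fun t => xb 0 t))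
    have hu : ∀ (i : Fin L) (s : Fin m),
        ubar (i:ℕ) s = ∑ j : Fin (N-L+1), α j * u ((i:ℕ) + (j:ℕ)) s := by
      intro i s
      have h3 := congrFun hα (Sum.inl (i, s))
      simp only [Matrix.mulVec, dotProduct, Sum.elim_inl] at h3
      rw [← h3]
      exact Finset.sum_congr rfl fun j _ => mul_comm _ _
    have hx0 : ∀ t, xb 0 t = ∑ j : Fin (N-L+1), α j * x (j:ℕ) t := by
      intro t
      have h3 := congrFun hα (Sum.inr t)
      simp only [Matrix.mulVec, dotProduct, Sum.elim_inr] at h3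
      rw [← h3]
      exact Finset.sum_congr rfl fun j _ => mul_comm _ _
    have hjN : ∀ (k : ℕ) (j : Fin (N-L+1)), k < L → k + (j:ℕ) < N := by
      intro k j hk
      have := j.isLt
      omega
    have hstate : ∀ k, k ≤ L → ∀ t, xb k t = ∑ j : Fin (N-L+1), α j * x (k + (j:ℕ)) t := by
      intro k
      induction k with
      | zero => intro _ t; simpa using hx0 t
      | succ k ih =>
        intro hk t
        have hkL : k < L := by omega
        have hrec := congrFun ((hxb k hkL).1) t
        rw [hrec, Pi.add_apply]
        have hxbk : xb k = (fun r => ∑ j : Fin (N-L+1), α j * x (k + (j:ℕ)) r) :=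
          funext fun r => ih (by omega) r
        have hubark : ubar k = (fun s => ∑ j : Fin (N-L+1), α j * u (k + (j:ℕ)) s) :=
          funext fun s => hu ⟨k, hkL⟩ s
        rw [hxbk, hubark, auxMulVecScalar, auxMulVecScalar, ← Finset.sum_add_distrib]
        refine Finset.sum_congr rfl fun j _ => ?_
        rw [← mul_add]
        congr 1
        have hdata := congrFun (hxr (k + (j:ℕ)) (hjN k j hkL)) t
        rw [show k + 1 + (j:ℕ) = (k + (j:ℕ)) + 1 by omega, hdata]
        rfl
    refine ⟨α, fun i hi => ⟨fun s => hu ⟨i, hi⟩ s, fun s => ?_⟩⟩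
    have hout := congrFun ((hxb i hi).2) s
    rw [hout, Pi.add_apply]
    have hxbi : xb i = (fun r => ∑ j : Fin (N-L+1), α j * x (i + (j:ℕ)) r) :=
      funext fun r => hstate i (le_of_lt hi) r
    have hubari : ubar i = (fun s' => ∑ j : Fin (N-L+1), α j * u (i + (j:ℕ)) s') :=
      funext fun s' => hu ⟨i, hi⟩ s'
    rw [hxbi, hubari, auxMulVecScalar, auxMulVecScalar, ← Finset.sum_add_distrib]
    refine Finset.sum_congr rfl fun j _ => ?_
    rw [← mul_add]
    congr 1
    have hdata := congrFun (hyr (i + (j:ℕ)) (hjN i j hi)) s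
    rw [hdata]
    rfl
  · rintro ⟨α, hα⟩
    have hjN : ∀ (k : ℕ) (j : Fin (N-L+1)), k < L → k + (j:ℕ) < N := by
      intro k j hk
      have := j.isLt
      omega
    refine ⟨fun k t => ∑ j : Fin (N-L+1), α j * x (k + (j:ℕ)) t, fun k hk => ⟨?_, ?_⟩⟩
    · funext t
      show (∑ j : Fin (N-L+1), α j * x (k + 1 + (j:ℕ)) t) = _
      have hubark : ubar k = (fun s => ∑ j : Fin (N-L+1), α j * u (k + (j:ℕ)) s) :=
        funext fun s => (hα k hk).1 s
      rw [Pi.add_apply, hubark, auxMulVecScalar, auxMulVecScalar, ← Finset.sum_add_distrib]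
      refine Finset.sum_congr rfl fun j _ => ?_
      rw [← mul_add]
      congr 1
      have hdata := congrFun (hxr (k + (j:ℕ)) (hjN k j hk)) t
      rw [show k + 1 + (j:ℕ) = (k + (j:ℕ)) + 1 by omega, hdata]
      rfl
    · funext s
      rw [(hα k hk).2 s]
      have hubark : ubar k = (fun s' => ∑ j : Fin (N-L+1), α j * u (k + (j:ℕ)) s') :=
        funext fun s' => (hα k hk).1 s'
      rw [Pi.add_apply, hubark, auxMulVecScalar, auxMulVecScalar, ← Finset.sum_add_distrib]
      refine Finset.sum_congr rfl fun j _ => ?_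
      rw [← mul_add]
      congr 1
      have hdata := congrFun (hyr (k + (j:ℕ)) (hjN k j hk)) s
      rw [hdata]
      rfl
end

section
/- A system (A,B,C,D) satisfies the L-IQC given by (g, M) if and only if for every trajectory (u_k, y_k), k = 0,…,L−1, of (A,B,C,D) with initial state x_0 = 0, the single inequality Σ_{k=0}^{L−1} r_kᵀ M r_k ≥ 0 holds, where r_k = Σ_{j=0}^{k} g_j w_{k−j} and w_k = (u_k; y_k). That is, it suffices to verify the IQC inequality for the longest horizon h = L−1. -/
open Matrix Finset

/-- `(u, y)` is a trajectory of `(A, B, C, D)` over the horizon `N` starting from `x₀ = 0`. -/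
def IsZeroInitTrajectory {n m p : ℕ} (A : Matrix (Fin n) (Fin n) ℝ) (B : Matrix (Fin n) (Fin m) ℝ)
    (C : Matrix (Fin p) (Fin n) ℝ) (D : Matrix (Fin p) (Fin m) ℝ)
    (N : ℕ) (u : ℕ → Fin m → ℝ) (y : ℕ → Fin p → ℝ) : Prop :=
  ∃ x : ℕ → Fin n → ℝ, x 0 = 0 ∧ ∀ k < N,
    x (k + 1) = A.mulVec (x k) + B.mulVec (u k) ∧
    y k = C.mulVec (x k) + D.mulVec (u k)

/-- The filtered signal `r_k = Σ_{j=0}^{k} g_j w_{k-j}` with `w_k = (u_k; y_k)`. -/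
def filteredSignal {m p nr : ℕ} (g : ℕ → Matrix (Fin nr) (Fin (m + p)) ℝ)
    (u : ℕ → Fin m → ℝ) (y : ℕ → Fin p → ℝ) (k : ℕ) : Fin nr → ℝ :=
  ∑ j ∈ Finset.range (k + 1), (g j).mulVec (Fin.append (u (k - j)) (y (k - j)))

/-- The system `(A, B, C, D)` satisfies the `L`-IQC given by `(g, M)`. -/
def SatisfiesLIQC {n m p nr : ℕ} (A : Matrix (Fin n) (Fin n) ℝ) (B : Matrix (Fin n) (Fin m) ℝ)
    (C : Matrix (Fin p) (Fin n) ℝ) (D : Matrix (Fin p) (Fin m) ℝ) (L : ℕ)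
    (g : ℕ → Matrix (Fin nr) (Fin (m + p)) ℝ) (M : Matrix (Fin nr) (Fin nr) ℝ) : Prop :=
  ∀ u : ℕ → Fin m → ℝ, ∀ y : ℕ → Fin p → ℝ, IsZeroInitTrajectory A B C D L u y →
    ∀ h < L, 0 ≤ ∑ k ∈ Finset.range (h + 1),
      (filteredSignal g u y k) ⬝ᵥ M.mulVec (filteredSignal g u y k)

lemma append_zero_zero {m p : ℕ} :
    Fin.append (0 : Fin m → ℝ) (0 : Fin p → ℝ) = 0 := by
  funext i
  refine Fin.addCases (motive := fun i => Fin.append (0 : Fin m → ℝ) 0 i = 0) ?_ ?_ i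
  · intro j; simp [Fin.append_left]
  · intro j; simp [Fin.append_right]

/-- it suffices to check the IQC inequality for the longest horizon `h = L-1`. -/
theorem statement2 {n m p nr L : ℕ} (A : Matrix (Fin n) (Fin n) ℝ) (B : Matrix (Fin n) (Fin m) ℝ)
    (C : Matrix (Fin p) (Fin n) ℝ) (D : Matrix (Fin p) (Fin m) ℝ)
    (g : ℕ → Matrix (Fin nr) (Fin (m + p)) ℝ) (M : Matrix (Fin nr) (Fin nr) ℝ)
    (hM : M.IsSymm) :
    SatisfiesLIQC A B C D L g M ↔
      (∀ u : ℕ → Fin m → ℝ, ∀ y : ℕ → Fin p → ℝ, IsZeroInitTrajectory A B C D L u y →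
        0 ≤ ∑ k ∈ Finset.range L,
          (filteredSignal g u y k) ⬝ᵥ M.mulVec (filteredSignal g u y k)) := by
  constructor
  · intro hS u y hT
    rcases Nat.eq_zero_or_pos L with hL | hL
    · simp [hL]
    · have h1 := hS u y hT (L - 1) (Nat.sub_lt hL one_pos)
      have h2 : L - 1 + 1 = L := by omega
      rwa [h2] at h1
  · intro hS u y hT h hh
    set s := L - (h + 1) with hs
    have hsL : s + (h + 1) = L := by omega
    obtain ⟨x, hx0, hx⟩ := hT
    set u' : ℕ → Fin m → ℝ := fun k => if k < s then 0 else u (k - s) with hu'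
    set y' : ℕ → Fin p → ℝ := fun k => if k < s then 0 else y (k - s) with hy'
    set x' : ℕ → Fin n → ℝ := fun k => if k < s then 0 else x (k - s) with hx'
    have hT' : IsZeroInitTrajectory A B C D L u' y' := by
      refine ⟨x', ?_, ?_⟩
      · by_cases h0 : 0 < s <;> simp [hx', h0, hx0]
      · intro k hk
        by_cases hks : k < s
        · constructor
          · by_cases hk1 : k + 1 < s
            · simp [hx', hu', hks, hk1, Matrix.mulVec_zero]
            · have : k + 1 = s := by omega
              simp [hx', hu', hks, hk1, this, hx0, Matrix.mulVec_zero]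
          · simp [hx', hu', hy', hks, Matrix.mulVec_zero]
        · have hks' : ¬ k + 1 < s := by omega
          have hkk : k + 1 - s = (k - s) + 1 := by omega
          have hlt : k - s < L := by omega
          constructor
          · simp only [hx', hu', if_neg hks, if_neg hks', hkk]
            exact (hx (k - s) hlt).1
          · simp only [hx', hu', hy', if_neg hks]
            exact (hx (k - s) hlt).2
    have key := hS u' y' hT'
    -- filtered signal is zero before time s
    have hr0 : ∀ k < s, filteredSignal g u' y' k = 0 := by
      intro k hk
      unfold filteredSignal
      refine Finset.sum_eq_zero fun j hj => ?_
      have : k - j < s := lt_of_le_of_lt (Nat.sub_le _ _) hk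
      simp [hu', hy', this, append_zero_zero, Matrix.mulVec_zero]
    -- filtered signal after time s is the shifted original
    have hr : ∀ i, filteredSignal g u' y' (s + i) = filteredSignal g u y i := by
      intro i
      unfold filteredSignal
      rw [show s + i + 1 = (i + 1) + s by ring, Finset.sum_range_add]
      have h2 : ∑ j ∈ Finset.range s,
          (g (i + 1 + j)).mulVec
            (Fin.append (u' (s + i - (i + 1 + j))) (y' (s + i - (i + 1 + j)))) = 0 := by
        refine Finset.sum_eq_zero fun j hj => ?_
        have hj' : j < s := Finset.mem_range.mp hj
        have : s + i - (i + 1 + j) < s := by omega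
        simp [hu', hy', this, append_zero_zero, Matrix.mulVec_zero]
      rw [h2, add_zero]
      refine Finset.sum_congr rfl fun j hj => ?_
      have hj' : j ≤ i := Nat.lt_succ_iff.mp (Finset.mem_range.mp hj)
      have h1 : ¬ s + i - j < s := by omega
      have h3 : s + i - j - s = i - j := by omega
      simp [hu', hy', h1, h3]
    rw [← hsL, Finset.sum_range_add] at key
    have hz : ∑ k ∈ Finset.range s,
        (filteredSignal g u' y' k) ⬝ᵥ M.mulVec (filteredSignal g u' y' k) = 0 := by
      refine Finset.sum_eq_zero fun k hk => ?_
      rw [hr0 k (Finset.mem_range.mp hk)]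
      simp
    rw [hz, zero_add] at key
    calc (0:ℝ) ≤ _ := key
      _ = _ := Finset.sum_congr rfl fun k _ => by rw [hr k]
end

section
/- Suppose (u_k, y_k), k = 0,…,N−1, is a trajectory of a minimal realization (A,B,C,D) of order n, and suppose (A,B,C,D) satisfies the (L−ν)-IQC given by (g, M) for some ν with n ≤ ν < L ≤ N. Then for every α ∈ ℝ^{N−L+1} with a zero data-prefix of length ν, the inequality Σ_{k=0}^{L−1} ρ_kᵀ M ρ_k ≥ 0 holds, where ρ_k = Σ_{j=0}^{k} g_j ŵ_{k−j} and ŵ_i = Σ_{j=0}^{N−L} α_j (u_{i+j}; y_{i+j}). (No persistence of excitation is needed for this necessity direction.) -/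
open Matrix Finset

/-- The linear combination `Σ_j α_j u_{i+j}` of time shifts of a signal. -/
def combSignal {q : ℕ} (N L : ℕ) (α : Fin (N - L + 1) → ℝ) (u : ℕ → Fin q → ℝ) (i : ℕ) :
    Fin q → ℝ :=
  fun s => ∑ j : Fin (N - L + 1), α j * u (i + (j : ℕ)) s

/-- `α` has a zero data-prefix of length `ν` with respect to the data `(u, y)`. -/
def ZeroDataPrefix {m p : ℕ} (N L ν : ℕ) (α : Fin (N - L + 1) → ℝ)
    (u : ℕ → Fin m → ℝ) (y : ℕ → Fin p → ℝ) : Prop :=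
  ∀ i < ν, combSignal N L α u i = 0 ∧ combSignal N L α y i = 0

lemma comb_mulVec {q r N L : ℕ} (α : Fin (N - L + 1) → ℝ) (E : Matrix (Fin r) (Fin q) ℝ)
    (v : ℕ → Fin q → ℝ) (i : ℕ) :
    combSignal N L α (fun k => E.mulVec (v k)) i = E.mulVec (combSignal N L α v i) := by
  funext s
  simp only [combSignal, Matrix.mulVec, dotProduct, Finset.mul_sum]
  rw [Finset.sum_comm]
  exact Finset.sum_congr rfl fun j _ => Finset.sum_congr rfl fun t _ => by ring

lemma comb_add {q N L : ℕ} (α : Fin (N - L + 1) → ℝ) (f g : ℕ → Fin q → ℝ) (i : ℕ) :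
    combSignal N L α (fun k => f k + g k) i
      = combSignal N L α f i + combSignal N L α g i := by
  funext s
  simp [combSignal, mul_add, Finset.sum_add_distrib]

/-- data-based necessity: the `(L-ν)`-IQC implies the data inequality;
no persistence of excitation is needed. -/
theorem statement4 {n m p nr N L ν : ℕ} (A : Matrix (Fin n) (Fin n) ℝ)
    (B : Matrix (Fin n) (Fin m) ℝ) (C : Matrix (Fin p) (Fin n) ℝ) (D : Matrix (Fin p) (Fin m) ℝ)
    (u : ℕ → Fin m → ℝ) (y : ℕ → Fin p → ℝ)
    (g : ℕ → Matrix (Fin nr) (Fin (m + p)) ℝ) (M : Matrix (Fin nr) (Fin nr) ℝ)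
    (hM : M.IsSymm)
    (hnν : n ≤ ν) (hν : ν < L) (hLN : L ≤ N)
    (htraj : IsTrajectory A B C D N u y)
    (hmin : IsMinimal A B C)
    (hiqc : SatisfiesLIQC A B C D (L - ν) g M) :
    ∀ α : Fin (N - L + 1) → ℝ, ZeroDataPrefix N L ν α u y →
      0 ≤ ∑ k ∈ Finset.range L,
        (filteredSignal g (combSignal N L α u) (combSignal N L α y) k) ⬝ᵥ
          M.mulVec (filteredSignal g (combSignal N L α u) (combSignal N L α y) k) := by
  intro α hzp
  obtain ⟨x, hx⟩ := htraj
  set uh := combSignal N L α u with huh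
  set yh := combSignal N L α y with hyh
  set xh : ℕ → Fin n → ℝ := fun i => combSignal N L α x i with hxh
  -- shifted dynamics
  have hdyn : ∀ i < L, xh (i + 1) = A.mulVec (xh i) + B.mulVec (uh i) ∧
      yh i = C.mulVec (xh i) + D.mulVec (uh i) := by
    intro i hi
    have hvalid : ∀ j : Fin (N - L + 1), i + (j : ℕ) < N := by
      intro j
      have := j.isLt
      omega
    constructor
    · have h1 : xh (i + 1) = combSignal N L α (fun k => A.mulVec (x k) + B.mulVec (u k)) i := by
        funext s
        simp only [hxh, combSignal]
        apply Finset.sum_congr rfl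
        intro j _
        have : i + 1 + (j : ℕ) = (i + (j : ℕ)) + 1 := by omega
        rw [this, (hx (i + (j : ℕ)) (hvalid j)).1]
      rw [h1, comb_add, comb_mulVec, comb_mulVec]
    · have h2 : yh i = combSignal N L α (fun k => C.mulVec (x k) + D.mulVec (u k)) i := by
        funext s
        simp only [hyh, combSignal]
        apply Finset.sum_congr rfl
        intro j _
        rw [(hx (i + (j : ℕ)) (hvalid j)).2]
      rw [h2, comb_add, comb_mulVec, comb_mulVec]
  -- injectivity of the observability matrix
  have hinj : ∀ v : Fin n → ℝ, (obsMat A C).mulVec v = 0 → v = 0 := by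
    intro v hv
    have hker : v ∈ LinearMap.ker (obsMat A C).mulVecLin := by
      simpa [Matrix.mulVecLin_apply] using hv
    have h1 := LinearMap.finrank_range_add_finrank_ker (obsMat A C).mulVecLin
    have h2 : Module.finrank ℝ (Fin n → ℝ) = n := Module.finrank_fin_fun ℝ
    have h3 : Module.finrank ℝ (LinearMap.range (obsMat A C).mulVecLin) = n := hmin.1
    have h4 : Module.finrank ℝ (LinearMap.ker (obsMat A C).mulVecLin) = 0 := by omega
    have h5 : LinearMap.ker (obsMat A C).mulVecLin = ⊥ :=
      Submodule.finrank_eq_zero.mp h4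
    rw [h5] at hker
    simpa using hker
  -- the prefix of the shifted state
  have hxpow : ∀ i, i ≤ ν → xh i = (A ^ i).mulVec (xh 0) := by
    intro i
    induction i with
    | zero => intro _; simp [Matrix.one_mulVec]
    | succ i ih =>
      intro hi
      have hiν : i < ν := by omega
      have hiL : i < L := by omega
      have hu0 : uh i = 0 := (hzp i hiν).1
      rw [(hdyn i hiL).1, hu0, Matrix.mulVec_zero, add_zero, ih (by omega),
        Matrix.mulVec_mulVec, ← pow_succ']
  have hCA : ∀ i < n, (C * A ^ i).mulVec (xh 0) = 0 := by
    intro i hi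
    have hiν : i < ν := by omega
    have hiL : i < L := by omega
    have hy0 : yh i = 0 := (hzp i hiν).2
    have hu0 : uh i = 0 := (hzp i hiν).1
    have := (hdyn i hiL).2
    rw [hy0, hu0, Matrix.mulVec_zero, add_zero] at this
    rw [← Matrix.mulVec_mulVec, ← hxpow i (le_of_lt hiν), ← this]
  have hobs : (obsMat A C).mulVec (xh 0) = 0 := by
    funext ip
    have := congrFun (hCA ip.1 ip.1.isLt) ip.2
    simpa [obsMat, Matrix.mulVec, dotProduct] using this
  have hx0 : xh 0 = 0 := hinj _ hobs
  have hxzero : ∀ i ≤ ν, xh i = 0 := by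
    intro i hi
    rw [hxpow i hi, hx0, Matrix.mulVec_zero]
  -- zero window
  have hw0 : ∀ i < ν, Fin.append (uh i) (yh i) = (0 : Fin (m + p) → ℝ) := by
    intro i hi
    rw [huh, hyh, (hzp i hi).1, (hzp i hi).2, append_zero_zero]
  -- shifted trajectory
  set u' : ℕ → Fin m → ℝ := fun k => uh (k + ν) with hu'
  set y' : ℕ → Fin p → ℝ := fun k => yh (k + ν) with hy'
  have htraj' : IsZeroInitTrajectory A B C D (L - ν) u' y' := by
    refine ⟨fun k => xh (k + ν), ?_, ?_⟩
    · show xh (0 + ν) = 0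
      simpa using hxzero ν le_rfl
    · intro k hk
      have hkL : k + ν < L := by omega
      have h := hdyn (k + ν) hkL
      constructor
      · show xh (k + 1 + ν) = A.mulVec (xh (k + ν)) + B.mulVec (u' k)
        have he : k + 1 + ν = (k + ν) + 1 := by omega
        rw [he]
        exact h.1
      · show yh (k + ν) = C.mulVec (xh (k + ν)) + D.mulVec (u' k)
        exact h.2
  -- the filtered signal vanishes on the prefix
  have hr0 : ∀ k < ν, filteredSignal g uh yh k = 0 := by
    intro k hk
    unfold filteredSignal
    apply Finset.sum_eq_zero
    intro j hj
    rw [hw0 (k - j) (by omega), Matrix.mulVec_zero]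
  -- the filtered signal shifts
  have hrshift : ∀ k, ν ≤ k → filteredSignal g uh yh k = filteredSignal g u' y' (k - ν) := by
    intro k hk
    unfold filteredSignal
    have hsplit : k + 1 = (k - ν + 1) + ν := by omega
    rw [hsplit, Finset.sum_range_add]
    have hz : ∀ i ∈ Finset.range ν,
        (g (k - ν + 1 + i)).mulVec (Fin.append (uh (k - (k - ν + 1 + i))) (yh (k - (k - ν + 1 + i)))) = 0 := by
      intro i hi
      simp only [Finset.mem_range] at hi
      rw [hw0 (k - (k - ν + 1 + i)) (by omega), Matrix.mulVec_zero]
    rw [Finset.sum_eq_zero hz, add_zero]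
    apply Finset.sum_congr rfl
    intro j hj
    simp only [Finset.mem_range] at hj
    have h1 : k - ν - j + ν = k - j := by omega
    simp only [hu', hy', h1]
  -- conclude
  have hfin : ∑ k ∈ Finset.range L,
      (filteredSignal g uh yh k) ⬝ᵥ M.mulVec (filteredSignal g uh yh k)
      = ∑ k ∈ Finset.range (L - ν),
        (filteredSignal g u' y' k) ⬝ᵥ M.mulVec (filteredSignal g u' y' k) := by
    have hL : L = ν + (L - ν) := by omega
    rw [hL, Finset.sum_range_add]
    simp only [Nat.add_sub_cancel_left]
    have hz : ∀ k ∈ Finset.range ν,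
        (filteredSignal g uh yh k) ⬝ᵥ M.mulVec (filteredSignal g uh yh k) = 0 := by
      intro k hk
      simp only [Finset.mem_range] at hk
      rw [hr0 k hk, zero_dotProduct]
    rw [Finset.sum_eq_zero hz, zero_add]
    apply Finset.sum_congr rfl
    intro k hk
    have h1 : filteredSignal g uh yh (ν + k) = filteredSignal g u' y' k := by
      rw [hrshift (ν + k) (by omega)]
      have he : ν + k - ν = k := by omega
      rw [he]
    rw [h1]
  rw [hfin]
  have := hiqc u' y' htraj' (L - ν - 1) (by omega)
  have h2 : L - ν - 1 + 1 = L - ν := by omega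
  rwa [h2] at this
end

section
/- Suppose (u_k, y_k), k = 0,…,N−1, is a trajectory of a minimal realization (A,B,C,D) of order n, u is persistently exciting of order L+n, and n ≤ ν < L. Fix C_c ∈ ℝ^{p×m} and γ² ∈ ℝ. Then the following are equivalent: (a) for every α ∈ ℝ^{N−L+1} with a zero data-prefix of length ν, γ² Σ_{i=0}^{L−1} |û_i|² − Σ_{i=0}^{L−1} |ŷ_i − C_c û_i|² ≥ 0, where û_i = Σ_{j=0}^{N−L} α_j u_{i+j} and ŷ_i = Σ_{j=0}^{N−L} α_j y_{i+j}; (b) for every trajectory (u_k, y_k), k = 0,…,L−ν−1, of (A,B,C,D) with initial state x_0 = 0 and every h = 0,…,L−ν−1, Σ_{k=0}^{h} (γ² |u_k|² − |y_k − C_c u_k|²) ≥ 0, i.e., (A,B,C,D) is confined over the horizon L−ν to the cone with center C_c and radius γ. -/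
/-!
(b) ⇒ (a): a zero data-prefix of length `ν ≥ n` has zero inputs and outputs, so by observability
the combined state vanishes at time `ν`; from time `ν` on the combined data is then a trajectory
from rest over the horizon `L - ν`, whose supply is the whole of (a).

(a) ⇒ (b): controllability and persistency of excitation of order `L + n` make the rows of
`[x_0 ⋯ x_{N-L}; H_L(u)]` linearly independent (Willems' fundamental lemma), so every initial
state and every input of length `L` is realized by a combination `α` of the data windows. Realize
the zero state, `ν` idle steps, the given input up to time `h` and zero input afterwards: `α` has a
zero data-prefix, the idle tail contributes `-|ŷ|² ≤ 0`, and (a) bounds the partial supply below.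

The fundamental lemma: shifting a left-kernel row `(ξ, η)` along the state equation `t ≤ n` times
and weighting the shifts by the coefficients of the characteristic polynomial of `A` cancels the
state part (Cayley–Hamilton); persistency of excitation kills the rest, which is a triangular
system in `η` and `ξ Aᵉ B`, and controllability gives `ξ = 0`.
-/
open Matrix Finset

namespace Matrix

variable {I J K : Type*} [Fintype I] [Fintype J] [Field K]

theorem vecMul_injective_of_rank_eq_card {M : Matrix I J K} (h : M.rank = Fintype.card I) :
    Function.Injective M.vecMul := by
  rw [vecMul_injective_iff, linearIndependent_iff_card_eq_finrank_span, ← h,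
    rank_eq_finrank_span_row, Set.finrank]

theorem mulVec_injective_of_rank_eq_card {M : Matrix I J K} (h : M.rank = Fintype.card J) :
    Function.Injective M.mulVec := by
  simpa only [vecMul_transpose] using
    vecMul_injective_of_rank_eq_card (M := Mᵀ) (by rwa [rank_transpose])

theorem mulVec_surjective_of_vecMul_injective {M : Matrix I J K}
    (h : Function.Injective M.vecMul) : Function.Surjective M.mulVec := by
  have hrank : Module.finrank K (LinearMap.range M.mulVecLin) = Module.finrank K (I → K) := by
    rw [Module.finrank_fintype_fun_eq_card]
    exact (vecMul_injective_iff.mp h).rank_matrix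
  exact LinearMap.range_eq_top.mp (Submodule.eq_top_of_finrank_eq hrank)

end Matrix

section StateSpace

variable {n m p : ℕ} {A : Matrix (Fin n) (Fin n) ℝ} {B : Matrix (Fin n) (Fin m) ℝ}
  {C : Matrix (Fin p) (Fin n) ℝ} {D : Matrix (Fin p) (Fin m) ℝ}

def SolvesStateSpace (A : Matrix (Fin n) (Fin n) ℝ) (B : Matrix (Fin n) (Fin m) ℝ)
    (C : Matrix (Fin p) (Fin n) ℝ) (D : Matrix (Fin p) (Fin m) ℝ) (K : ℕ)
    (x : ℕ → Fin n → ℝ) (u : ℕ → Fin m → ℝ) (y : ℕ → Fin p → ℝ) : Prop :=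
  ∀ k < K, x (k + 1) = A *ᵥ x k + B *ᵥ u k ∧ y k = C *ᵥ x k + D *ᵥ u k

namespace SolvesStateSpace

variable {K : ℕ} {x : ℕ → Fin n → ℝ} {u : ℕ → Fin m → ℝ} {y : ℕ → Fin p → ℝ}

theorem mono (h : SolvesStateSpace A B C D K x u y) {K' : ℕ} (hK : K' ≤ K) :
    SolvesStateSpace A B C D K' x u y :=
  fun k hk => h k (by omega)

theorem shift (h : SolvesStateSpace A B C D K x u y) (ν : ℕ) :
    SolvesStateSpace A B C D (K - ν) (fun k => x (ν + k)) (fun k => u (ν + k))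
      (fun k => y (ν + k)) :=
  fun k hk => h (ν + k) (by omega)

theorem zero : SolvesStateSpace A B C D K (fun _ => 0) (fun _ => 0) (fun _ => 0) := by
  intro k _
  simp

theorem eq_of_eq {x' : ℕ → Fin n → ℝ} {u' : ℕ → Fin m → ℝ} {y' : ℕ → Fin p → ℝ}
    (h : SolvesStateSpace A B C D K x u y) (h' : SolvesStateSpace A B C D K x' u' y')
    (hx₀ : x 0 = x' 0) (hu : ∀ k < K, u k = u' k) :
    (∀ k ≤ K, x k = x' k) ∧ ∀ k < K, y k = y' k := by
  have hx : ∀ k ≤ K, x k = x' k := by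
    intro k hk
    induction k with
    | zero => exact hx₀
    | succ k ih => rw [(h k hk).1, (h' k hk).1, ih (by omega), hu k hk]
  exact ⟨hx, fun k hk => by rw [(h k hk).2, (h' k hk).2, hx k hk.le, hu k hk]⟩

theorem state_eq_pow_mulVec (h : SolvesStateSpace A B C D K x u y) (hu : ∀ k < K, u k = 0) :
    ∀ k ≤ K, x k = (A ^ k) *ᵥ x 0 := by
  intro k hk
  induction k with
  | zero => simp
  | succ k ih =>
    rw [(h k hk).1, ih (by omega), hu k hk, mulVec_zero, add_zero, mulVec_mulVec, pow_succ']

theorem initial_eq_zero (hobs : (obsMat A C).rank = n) (h : SolvesStateSpace A B C D K x u y)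
    (hnK : n ≤ K) (hu : ∀ k < K, u k = 0) (hy : ∀ k < K, y k = 0) : x 0 = 0 := by
  refine Matrix.mulVec_injective_of_rank_eq_card (by simpa using hobs) ?_
  ext ⟨k, r⟩
  have hk : (k : ℕ) < K := by omega
  have := (h k hk).2
  rw [hy k hk, hu k hk, mulVec_zero, add_zero, h.state_eq_pow_mulVec hu k hk.le,
    mulVec_mulVec] at this
  simpa [obsMat, mulVec, dotProduct] using (congrFun this r).symm

end SolvesStateSpace

end StateSpace

section CombSignal

variable {N L : ℕ} (α : Fin (N - L + 1) → ℝ)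

theorem combSignal_eq_sum {q : ℕ} (z : ℕ → Fin q → ℝ) (i : ℕ) :
    combSignal N L α z i = ∑ j, α j • z (i + j) := by
  ext s
  simp [combSignal, Finset.sum_apply]

theorem combSignal_mulVec_add {q q₁ q₂ : ℕ} (M₁ : Matrix (Fin q) (Fin q₁) ℝ)
    (M₂ : Matrix (Fin q) (Fin q₂) ℝ) (z₁ : ℕ → Fin q₁ → ℝ) (z₂ : ℕ → Fin q₂ → ℝ) (i : ℕ) :
    combSignal N L α (fun k => M₁ *ᵥ z₁ k + M₂ *ᵥ z₂ k) i =
      M₁ *ᵥ combSignal N L α z₁ i + M₂ *ᵥ combSignal N L α z₂ i := by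
  simp only [combSignal_eq_sum, mulVec_sum, mulVec_smul, smul_add, Finset.sum_add_distrib]

variable {n m p : ℕ} {A : Matrix (Fin n) (Fin n) ℝ} {B : Matrix (Fin n) (Fin m) ℝ}
  {C : Matrix (Fin p) (Fin n) ℝ} {D : Matrix (Fin p) (Fin m) ℝ}
  {x : ℕ → Fin n → ℝ} {u : ℕ → Fin m → ℝ} {y : ℕ → Fin p → ℝ}

theorem SolvesStateSpace.combSignal (h : SolvesStateSpace A B C D N x u y) (hLN : L ≤ N) :
    SolvesStateSpace A B C D L (combSignal N L α x) (combSignal N L α u) (combSignal N L α y) := by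
  intro i hi
  have hwindow : ∀ j : Fin (N - L + 1), i + (j : ℕ) < N := fun j => by omega
  rw [← combSignal_mulVec_add, ← combSignal_mulVec_add]
  constructor <;> ext r <;> refine Finset.sum_congr rfl fun j _ => ?_
  · rw [add_right_comm, (h _ (hwindow j)).1]
  · rw [(h _ (hwindow j)).2]

end CombSignal

theorem PersistentlyExciting.eq_zero_of_forall_window {m K N : ℕ} {u : ℕ → Fin m → ℝ}
    (hpe : PersistentlyExciting m K N u) {ζ : ℕ → Fin m → ℝ}
    (h : ∀ j ≤ N - K, ∑ s ∈ range K, ζ s ⬝ᵥ u (j + s) = 0) : ∀ s < K, ζ s = 0 := by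
  have hζ : (fun q : Fin K × Fin m => ζ q.1 q.2) = 0 := by
    apply Matrix.vecMul_injective_of_rank_eq_card (M := hankelMat m K N u)
    · rw [Fintype.card_prod, Fintype.card_fin, Fintype.card_fin, mul_comm]
      exact hpe
    ext j
    simp only [zero_vecMul, Pi.zero_apply]
    rw [← h j (by omega), ← Fin.sum_univ_eq_sum_range]
    simp only [vecMul, dotProduct, hankelMat, Fintype.sum_prod_type, add_comm]
  intro s hs
  ext r
  exact congrFun hζ (⟨s, hs⟩, r)

theorem eq_zero_of_add_sum_smul_shift_eq_zero {R V : Type*} [Semiring R] [AddCommMonoid V]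
    [Module R V] {θ : ℕ → V} {K d : ℕ} (c : ℕ → R) (hK : ∀ s, K ≤ s → θ s = 0)
    (h : ∀ s < K, ∑ t ∈ range d, c t • θ (s + (d - t)) + θ s = 0) (s : ℕ) : θ s = 0 := by
  suffices ∀ r s, K ≤ s + r → θ s = 0 from this K s (by omega)
  intro r
  induction r with
  | zero => exact hK
  | succ r ih =>
    intro s hs
    by_cases hsK : K ≤ s + r
    · exact ih s hsK
    · have hlater : ∀ t ∈ range d, c t • θ (s + (d - t)) = 0 := fun t ht => by
        rw [ih _ (by simp only [mem_range] at ht; omega), smul_zero]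
      simpa [Finset.sum_eq_zero hlater] using h s (by omega)

section FundamentalLemma

variable {n m N L : ℕ} {A : Matrix (Fin n) (Fin n) ℝ} {B : Matrix (Fin n) (Fin m) ℝ}
  {x : ℕ → Fin n → ℝ} {u : ℕ → Fin m → ℝ} {ξ : Fin n → ℝ} {η : ℕ → Fin m → ℝ}

/-- If the row `(ξ, η₀, …, η_{L-1})` annihilates the windows `(x_j, u_j, …, u_{j+L-1})`, then
shifting it `t ≤ n` times along `x_{k+1} = A x_k + B u_k` gives the row
`(ξ Aᵗ, shiftRow (n - t), …, shiftRow (n + L - 1))`. -/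
def shiftRow (A : Matrix (Fin n) (Fin n) ℝ) (B : Matrix (Fin n) (Fin m) ℝ) (ξ : Fin n → ℝ)
    (η : ℕ → Fin m → ℝ) (s : ℕ) : Fin m → ℝ :=
  if s < n then ξ ᵥ* (A ^ (n - 1 - s) * B) else η (s - n)

theorem shiftRow_relation (hx : ∀ k < N, x (k + 1) = A *ᵥ x k + B *ᵥ u k)
    (hrel : ∀ j ≤ N - L, ξ ⬝ᵥ x j + ∑ i ∈ range L, η i ⬝ᵥ u (j + i) = 0) :
    ∀ t ≤ n, ∀ j, j + t ≤ N - L → (ξ ᵥ* A ^ t) ⬝ᵥ x j +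
      ∑ s ∈ range (L + t), shiftRow A B ξ η (s + (n - t)) ⬝ᵥ u (j + s) = 0 := by
  intro t
  induction t with
  | zero =>
    intro _ j hj
    simpa [shiftRow] using hrel j hj
  | succ t ih =>
    intro ht j hj
    have hnext := ih (by omega) (j + 1) (by omega)
    have hfirst : shiftRow A B ξ η (0 + (n - (t + 1))) = ξ ᵥ* (A ^ t * B) := by
      rw [shiftRow, if_pos (by omega), show n - 1 - (0 + (n - (t + 1))) = t by omega]
    rw [hx j (by omega), dotProduct_add, dotProduct_mulVec, dotProduct_mulVec, vecMul_vecMul,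
      vecMul_vecMul, ← pow_succ] at hnext
    rw [← add_assoc L t 1, sum_range_succ', hfirst, add_zero]
    have hshift : ∑ s ∈ range (L + t), shiftRow A B ξ η (s + 1 + (n - (t + 1))) ⬝ᵥ u (j + (s + 1))
        = ∑ s ∈ range (L + t), shiftRow A B ξ η (s + (n - t)) ⬝ᵥ u (j + 1 + s) :=
      sum_congr rfl fun s _ => by
        rw [show s + 1 + (n - (t + 1)) = s + (n - t) by omega, add_comm s 1, add_assoc]
    rw [hshift]
    linarith

theorem eq_zero_of_shiftRow_eq_zero (hctrb : (ctrbMat A B).rank = n)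
    (h : ∀ s, shiftRow A B ξ η s = 0) : ξ = 0 ∧ η = 0 := by
  refine ⟨Matrix.vecMul_injective_of_rank_eq_card (by simpa using hctrb) ?_, ?_⟩
  · ext ⟨e, r⟩
    have he := congrFun (h (n - 1 - e)) r
    rw [shiftRow, if_pos (by omega), show n - 1 - (n - 1 - e) = (e : ℕ) by omega] at he
    simpa [ctrbMat, vecMul, dotProduct] using he
  · ext i r
    simpa [shiftRow] using congrFun (h (n + i)) r

theorem eq_zero_of_forall_window_relation (hx : ∀ k < N, x (k + 1) = A *ᵥ x k + B *ᵥ u k)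
    (hpe : PersistentlyExciting m (L + n) N u) (hctrb : (ctrbMat A B).rank = n)
    (hLN : L + n ≤ N) (hη : ∀ i, L ≤ i → η i = 0)
    (hrel : ∀ j ≤ N - L, ξ ⬝ᵥ x j + ∑ i ∈ range L, η i ⬝ᵥ u (j + i) = 0) : ξ = 0 ∧ η = 0 := by
  set θ := shiftRow A B ξ η
  set c : ℕ → ℝ := fun t => A.charpoly.coeff t
  have hθ : ∀ s, L + n ≤ s → θ s = 0 := fun s hs => by
    simp [θ, shiftRow, show ¬ s < n by omega, hη _ (by omega : L ≤ s - n)]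
  have hCH : ∑ t ∈ range (n + 1), c t • A ^ t = 0 := by
    simpa [Polynomial.aeval_eq_sum_range] using aeval_self_charpoly A
  have hcn : c n = 1 := by
    simpa using (charpoly_monic A).coeff_natDegree
  have hwindow : ∀ j ≤ N - (L + n),
      ∑ s ∈ range (L + n), (∑ t ∈ range (n + 1), c t • θ (s + (n - t))) ⬝ᵥ u (j + s) = 0 := by
    intro j hj
    have hrow : ∀ t ∈ range (n + 1),
        ∑ s ∈ range (L + n), θ (s + (n - t)) ⬝ᵥ u (j + s) = -((ξ ᵥ* A ^ t) ⬝ᵥ x j) := by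
      intro t ht
      rw [mem_range] at ht
      have hpad : ∑ s ∈ range (n - t), θ (L + t + s + (n - t)) ⬝ᵥ u (j + (L + t + s)) = 0 :=
        sum_eq_zero fun s _ => by rw [hθ _ (by omega), zero_dotProduct]
      rw [show L + n = L + t + (n - t) by omega, sum_range_add, hpad, add_zero]
      linarith [shiftRow_relation hx hrel t (by omega) j (by omega)]
    calc ∑ s ∈ range (L + n), (∑ t ∈ range (n + 1), c t • θ (s + (n - t))) ⬝ᵥ u (j + s)
        = ∑ t ∈ range (n + 1), c t * ∑ s ∈ range (L + n), θ (s + (n - t)) ⬝ᵥ u (j + s) := by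
          simp only [sum_dotProduct, smul_dotProduct, smul_eq_mul, mul_sum]
          exact sum_comm
      _ = -((ξ ᵥ* ∑ t ∈ range (n + 1), c t • A ^ t) ⬝ᵥ x j) := by
          simp only [sum_congr rfl fun t ht => congrArg (c t * ·) (hrow t ht), vecMul_sum,
            vecMul_smul, sum_dotProduct, smul_dotProduct, smul_eq_mul, mul_neg, sum_neg_distrib]
      _ = 0 := by rw [hCH, vecMul_zero, zero_dotProduct, neg_zero]
  refine eq_zero_of_shiftRow_eq_zero hctrb
    (eq_zero_of_add_sum_smul_shift_eq_zero (K := L + n) (d := n) c hθ fun s hs => ?_)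
  simpa [sum_range_succ, hcn] using hpe.eq_zero_of_forall_window hwindow s hs

theorem exists_combSignal_eq (hx : ∀ k < N, x (k + 1) = A *ᵥ x k + B *ᵥ u k)
    (hpe : PersistentlyExciting m (L + n) N u) (hctrb : (ctrbMat A B).rank = n)
    (hLN : L + n ≤ N) (x₀ : Fin n → ℝ) (v : ℕ → Fin m → ℝ) :
    ∃ α : Fin (N - L + 1) → ℝ, combSignal N L α x 0 = x₀ ∧ ∀ i < L, combSignal N L α u i = v i := by
  set M := fromRows (of fun r (j : Fin (N - L + 1)) => x j r) (hankelMat m L N u)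
  have hinj : Function.Injective M.vecMul := by
    rw [← coe_vecMulLinear, injective_iff_map_eq_zero]
    intro w hw
    set η : ℕ → Fin m → ℝ := fun i => if hi : i < L then fun r => w (.inr (⟨i, hi⟩, r)) else 0
    obtain ⟨hξ, hη⟩ := eq_zero_of_forall_window_relation (ξ := w ∘ .inl) (η := η) hx hpe hctrb hLN
      (fun i hi => by simp [η, hi.not_gt]) fun j hj => by
        have hj : (w ᵥ* M) ⟨j, by omega⟩ = 0 := congrFun hw _
        rw [← Fin.sum_univ_eq_sum_range (fun i => η i ⬝ᵥ u (j + i)), ← hj]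
        simp [M, vecMul, dotProduct, hankelMat, Fintype.sum_prod_type, η, add_comm]
    ext (r | ⟨i, r⟩)
    · exact congrFun hξ r
    · simpa [η] using congrFun (congrFun hη i) r
  obtain ⟨α, hα⟩ := mulVec_surjective_of_vecMul_injective hinj (Sum.elim x₀ fun q => v q.1 q.2)
  rw [fromRows_mulVec, Sum.elim_eq_iff] at hα
  refine ⟨α, ?_, fun i hi => ?_⟩
  · rw [← hα.1]
    ext r
    simp [combSignal, mulVec, dotProduct, mul_comm]
  · ext r
    rw [← congrFun hα.2 (⟨i, hi⟩, r)]
    simp [combSignal, mulVec, dotProduct, hankelMat, mul_comm]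

end FundamentalLemma

section Cone

variable {n m p : ℕ} {A : Matrix (Fin n) (Fin n) ℝ} {B : Matrix (Fin n) (Fin m) ℝ}
  {C : Matrix (Fin p) (Fin n) ℝ} {D : Matrix (Fin p) (Fin m) ℝ} (Cc : Matrix (Fin p) (Fin m) ℝ)
  (γsq : ℝ)

def coneSupply (u : Fin m → ℝ) (y : Fin p → ℝ) : ℝ :=
  γsq * (u ⬝ᵥ u) - (y - Cc *ᵥ u) ⬝ᵥ (y - Cc *ᵥ u)

theorem coneSupply_zero_zero : coneSupply Cc γsq 0 0 = 0 := by
  simp [coneSupply]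

theorem coneSupply_zero_left_nonpos (y : Fin p → ℝ) : coneSupply Cc γsq 0 y ≤ 0 := by
  simpa [coneSupply] using dotProduct_star_self_nonneg y

def IsConfinedToCone (A : Matrix (Fin n) (Fin n) ℝ) (B : Matrix (Fin n) (Fin m) ℝ)
    (C : Matrix (Fin p) (Fin n) ℝ) (D : Matrix (Fin p) (Fin m) ℝ) (K : ℕ) : Prop :=
  ∀ ub yb, IsZeroInitTrajectory A B C D K ub yb →
    ∀ h < K, 0 ≤ ∑ k ∈ range (h + 1), coneSupply Cc γsq (ub k) (yb k)

variable {N L ν : ℕ} {x : ℕ → Fin n → ℝ} {u : ℕ → Fin m → ℝ} {y : ℕ → Fin p → ℝ}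
  {Cc} {γsq}

theorem sum_coneSupply_eq_zero_of_zeroDataPrefix {α : Fin (N - L + 1) → ℝ}
    (hα : ZeroDataPrefix N L ν α u y) :
    ∑ i ∈ range ν, coneSupply Cc γsq (combSignal N L α u i) (combSignal N L α y i) = 0 :=
  sum_eq_zero fun i hi => by
    rw [(hα i (mem_range.mp hi)).1, (hα i (mem_range.mp hi)).2, coneSupply_zero_zero]

theorem isConfinedToCone_of_data (hsol : SolvesStateSpace A B C D N x u y)
    (hpe : PersistentlyExciting m (L + n) N u) (hctrb : (ctrbMat A B).rank = n)
    (hLN : L + n ≤ N) (hνL : ν ≤ L)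
    (hdata : ∀ α, ZeroDataPrefix N L ν α u y →
      0 ≤ ∑ i ∈ range L, coneSupply Cc γsq (combSignal N L α u i) (combSignal N L α y i)) :
    IsConfinedToCone Cc γsq A B C D (L - ν) := by
  rintro ub yb ⟨xb, hxb₀, hxb : SolvesStateSpace A B C D (L - ν) xb ub yb⟩ h hh
  -- Realize `ub` on `[ν, ν + h]` after `ν` idle steps from rest, and idle again afterwards.
  set v : ℕ → Fin m → ℝ := fun k => if ν ≤ k ∧ k ≤ ν + h then ub (k - ν) else 0
  obtain ⟨α, hα₀, hαu⟩ := exists_combSignal_eq (fun k hk => (hsol k hk).1) hpe hctrb hLN 0 v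
  have hsolα := hsol.combSignal α (L := L) (by omega)
  have hidle : ∀ k < L, (k < ν ∨ ν + h < k) → combSignal N L α u k = 0 := fun k hk hk' => by
    rw [hαu k hk]
    simp only [v]
    rw [if_neg (by omega)]
  obtain ⟨hrest, hY₀⟩ := (hsolα.mono hνL).eq_of_eq SolvesStateSpace.zero hα₀
    fun k hk => hidle k (by omega) (.inl hk)
  have hU : ∀ k < h + 1, combSignal N L α u (ν + k) = ub k := fun k hk => by
    rw [hαu _ (by omega)]
    simp only [v]
    rw [if_pos (by omega), Nat.add_sub_cancel_left]
  have hY : ∀ k < h + 1, combSignal N L α y (ν + k) = yb k :=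
    (((hsolα.shift ν).mono (by omega)).eq_of_eq (hxb.mono (by omega))
      (by simpa [hxb₀] using hrest ν le_rfl) hU).2
  have hzero : ZeroDataPrefix N L ν α u y := fun i hi => ⟨hidle i (by omega) (.inl hi), hY₀ i hi⟩
  have hsplit := hdata α hzero
  rw [show range L = range (ν + (h + 1) + (L - ν - (h + 1))) by congr 1; omega, sum_range_add,
    sum_range_add, sum_coneSupply_eq_zero_of_zeroDataPrefix hzero, zero_add] at hsplit
  have htail : ∑ i ∈ range (L - ν - (h + 1)), coneSupply Cc γsq
      (combSignal N L α u (ν + (h + 1) + i)) (combSignal N L α y (ν + (h + 1) + i)) ≤ 0 :=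
    sum_nonpos fun i hi => by
      rw [hidle _ (by rw [mem_range] at hi; omega) (.inr (by omega))]
      exact coneSupply_zero_left_nonpos Cc γsq _
  have hmid : ∑ k ∈ range (h + 1), coneSupply Cc γsq
      (combSignal N L α u (ν + k)) (combSignal N L α y (ν + k)) =
      ∑ k ∈ range (h + 1), coneSupply Cc γsq (ub k) (yb k) :=
    sum_congr rfl fun k hk => by rw [hU k (mem_range.mp hk), hY k (mem_range.mp hk)]
  linarith

theorem data_nonneg_of_isConfinedToCone (hsol : SolvesStateSpace A B C D N x u y)
    (hobs : (obsMat A C).rank = n) (hnν : n ≤ ν) (hν : ν < L) (hLN : L ≤ N)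
    (hconf : IsConfinedToCone Cc γsq A B C D (L - ν)) (α : Fin (N - L + 1) → ℝ)
    (hα : ZeroDataPrefix N L ν α u y) :
    0 ≤ ∑ i ∈ range L, coneSupply Cc γsq (combSignal N L α u i) (combSignal N L α y i) := by
  have hsolα := (hsol.combSignal α hLN).mono hν.le
  have hU₀ : ∀ k < ν, combSignal N L α u k = 0 := fun k hk => (hα k hk).1
  have hX₀ := hsolα.initial_eq_zero hobs hnν hU₀ fun k hk => (hα k hk).2
  have hXν : combSignal N L α x ν = 0 := by
    rw [hsolα.state_eq_pow_mulVec hU₀ ν le_rfl, hX₀, mulVec_zero]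
  have hshift := hconf (fun k => combSignal N L α u (ν + k)) (fun k => combSignal N L α y (ν + k))
    ⟨fun k => combSignal N L α x (ν + k), hXν, (hsol.combSignal α hLN).shift ν⟩ (L - ν - 1)
    (by omega)
  rw [show L - ν - 1 + 1 = L - ν by omega] at hshift
  rwa [show range L = range (ν + (L - ν)) by congr 1; omega, sum_range_add,
    sum_coneSupply_eq_zero_of_zeroDataPrefix hα, zero_add]

end Cone

/-- data-based verification of conic relations: the data-based inequality (a)
is equivalent to the system being confined over the horizon `L-ν` to the cone with
center `Cc` and radius `γ`. -/
theorem statement7 {n m p N L ν : ℕ} (A : Matrix (Fin n) (Fin n) ℝ)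
    (B : Matrix (Fin n) (Fin m) ℝ) (C : Matrix (Fin p) (Fin n) ℝ) (D : Matrix (Fin p) (Fin m) ℝ)
    (u : ℕ → Fin m → ℝ) (y : ℕ → Fin p → ℝ)
    (htraj : IsTrajectory A B C D N u y)
    (hmin : IsMinimal A B C)
    (hpe : PersistentlyExciting m (L + n) N u)
    (hnν : n ≤ ν) (hν : ν < L) (hLN : L + n ≤ N)
    (Cc : Matrix (Fin p) (Fin m) ℝ) (γsq : ℝ) :
    (∀ α : Fin (N - L + 1) → ℝ, ZeroDataPrefix N L ν α u y →
      0 ≤ γsq * (∑ i ∈ Finset.range L, combSignal N L α u i ⬝ᵥ combSignal N L α u i) -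
          ∑ i ∈ Finset.range L,
            (combSignal N L α y i - Cc.mulVec (combSignal N L α u i)) ⬝ᵥ
            (combSignal N L α y i - Cc.mulVec (combSignal N L α u i))) ↔
    (∀ ub : ℕ → Fin m → ℝ, ∀ yb : ℕ → Fin p → ℝ,
      IsZeroInitTrajectory A B C D (L - ν) ub yb →
      ∀ h < L - ν, 0 ≤ ∑ k ∈ Finset.range (h + 1),
        (γsq * (ub k ⬝ᵥ ub k) -
          (yb k - Cc.mulVec (ub k)) ⬝ᵥ (yb k - Cc.mulVec (ub k)))) := by
  obtain ⟨x, hsol⟩ := htraj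
  have hsupply : ∀ α : Fin (N - L + 1) → ℝ,
      γsq * (∑ i ∈ range L, combSignal N L α u i ⬝ᵥ combSignal N L α u i) -
        ∑ i ∈ range L, (combSignal N L α y i - Cc *ᵥ combSignal N L α u i) ⬝ᵥ
          (combSignal N L α y i - Cc *ᵥ combSignal N L α u i) =
      ∑ i ∈ range L, coneSupply Cc γsq (combSignal N L α u i) (combSignal N L α y i) :=
    fun α => by rw [mul_sum, ← sum_sub_distrib]; rfl
  simp only [hsupply]
  exact ⟨isConfinedToCone_of_data hsol hpe hmin.2 hLN hν.le,
    fun hconf => data_nonneg_of_isConfinedToCone hsol hmin.1 hnν hν (by omega) hconf⟩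
end

section
/- Let G : ℓ²(ℕ, ℝ^m) → ℓ²(ℕ, ℝ^p), Ψ₁₁ : ℓ²(ℕ, ℝ^m) → ℓ²(ℕ, ℝ^m), Ψ₁₂ : ℓ²(ℕ, ℝ^p) → ℓ²(ℕ, ℝ^m), Ψ₂₁ : ℓ²(ℕ, ℝ^m) → ℓ²(ℕ, ℝ^{r₂}) and Ψ₂₂ : ℓ²(ℕ, ℝ^p) → ℓ²(ℕ, ℝ^{r₂}) be bounded causal linear operators. Assume Ψ₁₁ is bijective with bounded causal inverse Ψ₁₁⁻¹, and assume the operator norm ‖Ψ₁₂ ∘ G ∘ Ψ₁₁⁻¹‖ < 1. Then Ψ₁₁ + Ψ₁₂ ∘ G is bijective with bounded causal inverse, and the transformed system G̃ := (Ψ₂₁ + Ψ₂₂ ∘ G) ∘ (Ψ₁₁ + Ψ₁₂ ∘ G)⁻¹ is a bounded causal linear operator from ℓ²(ℕ, ℝ^m) to ℓ²(ℕ, ℝ^{r₂}). -/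
open Matrix Finset

/-- The Hilbert space `ℓ²(ℕ, ℝ^q)`. -/
noncomputable abbrev ell2 (q : ℕ) := lp (fun _ : ℕ => EuclideanSpace ℝ (Fin q)) 2

/-- The truncation operator `P_n`: it sets all entries `x_k` with `k > n` to zero. -/
noncomputable def truncP (q n : ℕ) (x : ell2 q) : ell2 q :=
  ⟨fun k => if k ≤ n then x k else 0, by
    refine Memℓp.of_exponent_ge (memℓp_zero ?_) (zero_le)
    refine Set.Finite.subset (Set.finite_Iic n) ?_
    intro k hk
    by_contra h
    simp only [Set.mem_Iic, not_le] at h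
    exact hk (if_neg (by omega))⟩

/-- A bounded linear operator `T : ℓ²(ℕ, ℝ^a) → ℓ²(ℕ, ℝ^b)` is causal if
`P_n ∘ T = P_n ∘ T ∘ P_n` for every `n`. -/
def Causal {a b : ℕ} (T : ell2 a →L[ℝ] ell2 b) : Prop :=
  ∀ n : ℕ, ∀ x : ell2 a, truncP b n (T x) = truncP b n (T (truncP a n x))

/-!
The inverse of `Ψ₁₁ + Ψ₁₂ G = (1 + A) Ψ₁₁`, where `A = Ψ₁₂ G Ψ₁₁⁻¹`, is `Ψ₁₁⁻¹ ∑ₖ (-A)ᵏ`.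
Causal operators on `ℓ²(ℕ, ℝ^a)` form a subring of the bounded operators which is closed
in the operator norm (causality is a condition on finitely many coordinates of `T x`, and
these depend continuously on `T`), so it contains the Neumann series of `-A`.
-/

lemma truncP_apply (q n : ℕ) (x : ell2 q) (k : ℕ) :
    truncP q n x k = if k ≤ n then x k else 0 := rfl

lemma truncP_eq_truncP_iff {q n : ℕ} {x y : ell2 q} :
    truncP q n x = truncP q n y ↔ ∀ k ≤ n, x k = y k := by
  constructor
  · intro h k hk
    simpa [truncP_apply, hk] using congrArg (fun z : ell2 q => z k) h
  · intro h
    refine lp.ext (funext fun k => ?_)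
    simp only [truncP_apply]
    split_ifs with hk
    exacts [h k hk, rfl]

lemma causal_iff {a b : ℕ} {T : ell2 a →L[ℝ] ell2 b} :
    Causal T ↔ ∀ n (x : ell2 a), ∀ k ≤ n, T x k = T (truncP a n x) k :=
  forall₂_congr fun _ _ => truncP_eq_truncP_iff

lemma causal_zero {a b : ℕ} : Causal (0 : ell2 a →L[ℝ] ell2 b) :=
  fun _ _ => rfl

lemma causal_id {a : ℕ} : Causal (ContinuousLinearMap.id ℝ (ell2 a)) :=
  causal_iff.2 fun n x k hk => by simp [truncP_apply, hk]

lemma Causal.comp {a b c : ℕ} {S : ell2 b →L[ℝ] ell2 c} {T : ell2 a →L[ℝ] ell2 b}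
    (hS : Causal S) (hT : Causal T) : Causal (S.comp T) := by
  intro n x
  simp only [ContinuousLinearMap.comp_apply]
  rw [hS n (T x), hT n x, ← hS n (T (truncP a n x))]

lemma Causal.add {a b : ℕ} {S T : ell2 a →L[ℝ] ell2 b}
    (hS : Causal S) (hT : Causal T) : Causal (S + T) := by
  rw [causal_iff] at *
  intro n x k hk
  simp [hS n x k hk, hT n x k hk]

lemma Causal.neg {a b : ℕ} {T : ell2 a →L[ℝ] ell2 b} (hT : Causal T) : Causal (-T) := by
  rw [causal_iff] at *
  intro n x k hk
  simp [hT n x k hk]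

def causalSubring (a : ℕ) : Subring (ell2 a →L[ℝ] ell2 a) where
  carrier := {T | Causal T}
  mul_mem' hS hT := hS.comp hT
  one_mem' := causal_id
  add_mem' hS hT := hS.add hT
  zero_mem' := causal_zero
  neg_mem' hT := hT.neg

lemma isClosed_causalSubring (a : ℕ) : IsClosed (causalSubring a : Set (ell2 a →L[ℝ] ell2 a)) := by
  have hset : (causalSubring a : Set (ell2 a →L[ℝ] ell2 a)) =
      ⋂ (n : ℕ) (x : ell2 a) (k : ℕ) (_ : k ≤ n), {T | T x k = T (truncP a n x) k} := by
    ext T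
    simp only [Set.mem_iInter]
    exact causal_iff
  have hcoord (y : ell2 a) (k : ℕ) : Continuous fun T : ell2 a →L[ℝ] ell2 a => T y k :=
    (lp.evalCLM ℝ _ 2 k).continuous.comp (continuous_eval_const y)
  rw [hset]
  exact isClosed_iInter fun n => isClosed_iInter fun x => isClosed_iInter fun k =>
    isClosed_iInter fun _ => isClosed_eq (hcoord x k) (hcoord _ k)

theorem Subring.inverse_one_sub_mem {R : Type*} [NormedRing R] [HasSummableGeomSeries R]
    {S : Subring R} (hS : IsClosed (S : Set R)) {x : R} (hx : x ∈ S) (h : ‖x‖ < 1) :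
    Ring.inverse (1 - x) ∈ S :=
  hS.mem_of_tendsto (hasSum_geom_series_inverse x h)
    (Filter.Eventually.of_forall fun _ => sum_mem fun k _ => pow_mem hx k)

theorem statement9_general {m p r₂ : ℕ}
    (G : ell2 m →L[ℝ] ell2 p) (Ψ11 : ell2 m →L[ℝ] ell2 m) (Ψ12 : ell2 p →L[ℝ] ell2 m)
    (Ψ21 : ell2 m →L[ℝ] ell2 r₂) (Ψ22 : ell2 p →L[ℝ] ell2 r₂)
    (hG : Causal G) (h12 : Causal Ψ12) (h21 : Causal Ψ21) (h22 : Causal Ψ22)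
    (Ψinv : ell2 m →L[ℝ] ell2 m) (hinv : Causal Ψinv)
    (hleft : Ψ11.comp Ψinv = ContinuousLinearMap.id ℝ (ell2 m))
    (hright : Ψinv.comp Ψ11 = ContinuousLinearMap.id ℝ (ell2 m))
    (hnorm : ‖Ψ12.comp (G.comp Ψinv)‖ < 1) :
    ∃ Φ : ell2 m →L[ℝ] ell2 m, Causal Φ ∧
      (Ψ11 + Ψ12.comp G).comp Φ = ContinuousLinearMap.id ℝ (ell2 m) ∧
      Φ.comp (Ψ11 + Ψ12.comp G) = ContinuousLinearMap.id ℝ (ell2 m) ∧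
      Causal ((Ψ21 + Ψ22.comp G).comp Φ) := by
  set A := Ψ12.comp (G.comp Ψinv)
  have hnegA : ‖-A‖ < 1 := by rwa [norm_neg]
  let U : (ell2 m →L[ℝ] ell2 m)ˣ := Units.oneSub (-A) hnegA * ⟨Ψ11, Ψinv, hleft, hright⟩
  have hU : (U : ell2 m →L[ℝ] ell2 m) = Ψ11 + Ψ12.comp G := by
    have hAΨ11 : A * Ψ11 = Ψ12.comp G := by
      simp only [A, ContinuousLinearMap.mul_def, ContinuousLinearMap.comp_assoc, hright]
      rfl
    simp [U, sub_neg_eq_add, add_mul, hAΨ11]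
  have hΦ : (↑U⁻¹ : ell2 m →L[ℝ] ell2 m) = Ψinv * Ring.inverse (1 - -A) := by
    rw [NormedRing.inverse_one_sub _ hnegA]
    rfl
  have hΦ_causal : Causal (↑U⁻¹ : ell2 m →L[ℝ] ell2 m) := by
    rw [hΦ]
    exact hinv.comp (Subring.inverse_one_sub_mem (isClosed_causalSubring m)
      (neg_mem (h12.comp (hG.comp hinv))) hnegA)
  refine ⟨↑U⁻¹, hΦ_causal, ?_, ?_, (h21.add (h22.comp hG)).comp hΦ_causal⟩
  · rw [← hU]; exact U.mul_inv
  · rw [← hU]; exact U.inv_mul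

/-- if `Ψ₁₁` has a bounded causal inverse and `‖Ψ₁₂ ∘ G ∘ Ψ₁₁⁻¹‖ < 1`, then
`Ψ₁₁ + Ψ₁₂ ∘ G` has a bounded causal inverse `Φ`, and the transformed system
`G̃ = (Ψ₂₁ + Ψ₂₂ ∘ G) ∘ Φ` is a bounded causal linear operator. -/
theorem statement9 {m p r₂ : ℕ}
    (G : ell2 m →L[ℝ] ell2 p) (Ψ11 : ell2 m →L[ℝ] ell2 m) (Ψ12 : ell2 p →L[ℝ] ell2 m)
    (Ψ21 : ell2 m →L[ℝ] ell2 r₂) (Ψ22 : ell2 p →L[ℝ] ell2 r₂)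
    (hG : Causal G) (h11 : Causal Ψ11) (h12 : Causal Ψ12) (h21 : Causal Ψ21) (h22 : Causal Ψ22)
    (Ψinv : ell2 m →L[ℝ] ell2 m) (hinv : Causal Ψinv)
    (hleft : Ψ11.comp Ψinv = ContinuousLinearMap.id ℝ (ell2 m))
    (hright : Ψinv.comp Ψ11 = ContinuousLinearMap.id ℝ (ell2 m))
    (hnorm : ‖Ψ12.comp (G.comp Ψinv)‖ < 1) :
    ∃ Φ : ell2 m →L[ℝ] ell2 m, Causal Φ ∧
      (Ψ11 + Ψ12.comp G).comp Φ = ContinuousLinearMap.id ℝ (ell2 m) ∧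
      Φ.comp (Ψ11 + Ψ12.comp G) = ContinuousLinearMap.id ℝ (ell2 m) ∧
      Causal ((Ψ21 + Ψ22.comp G).comp Φ) :=
  statement9_general G Ψ11 Ψ12 Ψ21 Ψ22 hG h12 h21 h22 Ψinv hinv hleft hright hnorm
end
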